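/- arXiv:2308.02777 — 7 statements merged into one kernel-verified Lean document; each statement's English description precedes it below -/
import Mathlib

section
/- Let n ≥ 3 be an integer and let x_1, …, x_n be nonnegative real numbers with x_1 + ⋯ + x_n = 1. Then n·∑_{i=1}^n x_i³ + 1/(n-1) ≥ ((2n-1)/(n-1))·∑_{i=1}^n x_i². -/
/-- Schur polynomial expression for three reals. -/
def schurP (a b c : ℝ) : ℝ :=
  a*(a-b)*(a-c) + b*(b-a)*(b-c) + c*(c-a)*(c-b)

lemma schurP_nonneg {a b c : ℝ} (ha : 0 ≤ a) (hb : 0 ≤ b) (hc : 0 ≤ c) :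
    0 ≤ schurP a b c := by
  have key : ∀ u v w : ℝ, 0 ≤ w → w ≤ v → v ≤ u → 0 ≤ schurP u v w := by
    intro u v w hw hwv hvu
    have h1 : 0 ≤ (u-v)^2*(u+v-w) := mul_nonneg (sq_nonneg _) (by linarith)
    have h2 : 0 ≤ w*((u-w)*(v-w)) :=
      mul_nonneg hw (mul_nonneg (by linarith) (by linarith))
    have hid : schurP u v w = (u-v)^2*(u+v-w) + w*((u-w)*(v-w)) := by
      unfold schurP; ring
    rw [hid]; linarith
  have h132 : ∀ u v w : ℝ, schurP u v w = schurP u w v := by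
    intro u v w; unfold schurP; ring
  have h213 : ∀ u v w : ℝ, schurP u v w = schurP v u w := by
    intro u v w; unfold schurP; ring
  have h231 : ∀ u v w : ℝ, schurP u v w = schurP v w u := by
    intro u v w; unfold schurP; ring
  have h312 : ∀ u v w : ℝ, schurP u v w = schurP w u v := by
    intro u v w; unfold schurP; ring
  have h321 : ∀ u v w : ℝ, schurP u v w = schurP w v u := by
    intro u v w; unfold schurP; ring
  rcases le_total a b with h | h <;> rcases le_total b c with h' | h' <;>
    rcases le_total a c with h'' | h''
  all_goals first
    | exact key a b c hc (by linarith) (by linarith)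
    | (rw [h132 a b c]; exact key a c b hb (by linarith) (by linarith))
    | (rw [h213 a b c]; exact key b a c hc (by linarith) (by linarith))
    | (rw [h231 a b c]; exact key b c a ha (by linarith) (by linarith))
    | (rw [h312 a b c]; exact key c a b hb (by linarith) (by linarith))
    | (rw [h321 a b c]; exact key c b a ha (by linarith) (by linarith))

/-- Auxiliary closed form: the inner sum over `k ∉ {i,j}` of `schurP (x i) (x j) (x k)`. -/
def GG (n : ℕ) (S3 S2 a b : ℝ) : ℝ :=
  S3 - S2*(a+b) + a*b - (a-b)^2 + ((n:ℝ)-1)*((a+b)*(a-b)^2)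

theorem stmt_0 (n : ℕ) (hn : 3 ≤ n) (x : Fin n → ℝ)
    (hx : ∀ i, 0 ≤ x i) (hsum : ∑ i, x i = 1) :
    (n : ℝ) * ∑ i, (x i) ^ 3 + 1 / ((n : ℝ) - 1) ≥
      ((2 * (n : ℝ) - 1) / ((n : ℝ) - 1)) * ∑ i, (x i) ^ 2 := by
  have hn3 : (3:ℝ) ≤ (n:ℝ) := by exact_mod_cast hn
  have hn1 : (0:ℝ) < (n:ℝ) - 1 := by linarith
  -- abbreviations
  set S3 : ℝ := ∑ i, (x i) ^ 3 with hS3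
  set S2 : ℝ := ∑ i, (x i) ^ 2 with hS2
  -- summation of a cubic polynomial of the x j's
  have L : ∀ d3 d2 d1 d0 : ℝ,
      (∑ j, ((x j) ^ 3 * d3 + (x j) ^ 2 * d2 + (x j) * d1 + d0))
        = S3 * d3 + S2 * d2 + d1 + (n:ℝ) * d0 := by
    intro d3 d2 d1 d0
    rw [Finset.sum_add_distrib, Finset.sum_add_distrib, Finset.sum_add_distrib,
      ← Finset.sum_mul, ← Finset.sum_mul, ← Finset.sum_mul, hsum, one_mul,
      Finset.sum_const, Finset.card_univ, Fintype.card_fin, nsmul_eq_mul, ← hS3, ← hS2]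
  -- sum over all k
  have stepK : ∀ a b : ℝ, (∑ k, schurP a b (x k))
      = S3 * 1 + S2 * (-(a+b)) + (a*b - (a-b)^2) + (n:ℝ) * ((a+b)*(a-b)^2) := by
    intro a b
    rw [← L 1 (-(a+b)) (a*b - (a-b)^2) ((a+b)*(a-b)^2)]
    exact Finset.sum_congr rfl fun k _ => by unfold schurP; ring
  -- inner sum over k ∉ {i, j}
  have inner : ∀ i : Fin n, ∀ j ∈ Finset.univ.erase i,
      (∑ k ∈ (Finset.univ.erase i).erase j, schurP (x i) (x j) (x k))
        = GG n S3 S2 (x i) (x j) := by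
    intro i j hj
    rw [Finset.sum_erase_eq_sub hj, Finset.sum_erase_eq_sub (Finset.mem_univ i), stepK]
    unfold GG schurP; ring
  -- middle sum over j ≠ i
  have mid : ∀ i : Fin n,
      (∑ j ∈ Finset.univ.erase i,
        ∑ k ∈ (Finset.univ.erase i).erase j, schurP (x i) (x j) (x k))
        = (∑ j, GG n S3 S2 (x i) (x j)) - GG n S3 S2 (x i) (x i) := by
    intro i
    rw [Finset.sum_congr rfl (inner i), Finset.sum_erase_eq_sub (Finset.mem_univ i)]
  have sumJ : ∀ a : ℝ, (∑ j, GG n S3 S2 a (x j))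
      = S3 * ((n:ℝ)-1) + S2 * (a - 1 - a*(n:ℝ))
        + (-S2 + 3*a + a^2 - a^2*(n:ℝ))
        + (n:ℝ) * (S3 - a*S2 - a^2 - a^3 + a^3*(n:ℝ)) := by
    intro a
    rw [← L ((n:ℝ)-1) (a - 1 - a*(n:ℝ)) (-S2 + 3*a + a^2 - a^2*(n:ℝ))
        (S3 - a*S2 - a^2 - a^3 + a^3*(n:ℝ))]
    exact Finset.sum_congr rfl fun j _ => by unfold GG; ring
  -- the full triple sum
  have key : (∑ i, ∑ j ∈ Finset.univ.erase i,
      ∑ k ∈ (Finset.univ.erase i).erase j, schurP (x i) (x j) (x k))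
      = 3 * ((n:ℝ)*((n:ℝ)-1)*S3 - (2*(n:ℝ)-1)*S2 + 1) := by
    have e1 : ∀ i : Fin n,
        (∑ j ∈ Finset.univ.erase i,
          ∑ k ∈ (Finset.univ.erase i).erase j, schurP (x i) (x j) (x k))
        = (x i)^3 * ((n:ℝ)^2 - (n:ℝ)) + (x i)^2 * (-2*(n:ℝ))
          + (x i) * (3 + 3*S2 - 2*S2*(n:ℝ)) + (-2*S3 + 2*S3*(n:ℝ) - 2*S2) := by
      intro i
      rw [mid i, sumJ (x i)]
      unfold GG; ring
    rw [Finset.sum_congr rfl fun i _ => e1 i,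
      L ((n:ℝ)^2 - (n:ℝ)) (-2*(n:ℝ)) (3 + 3*S2 - 2*S2*(n:ℝ)) (-2*S3 + 2*S3*(n:ℝ) - 2*S2)]
    ring
  have pos : 0 ≤ (∑ i, ∑ j ∈ Finset.univ.erase i,
      ∑ k ∈ (Finset.univ.erase i).erase j, schurP (x i) (x j) (x k)) :=
    Finset.sum_nonneg fun i _ => Finset.sum_nonneg fun j _ => Finset.sum_nonneg
      fun k _ => schurP_nonneg (hx i) (hx j) (hx k)
  rw [key] at pos
  have key2 : (2*(n:ℝ)-1)*S2 ≤ (n:ℝ)*((n:ℝ)-1)*S3 + 1 := by linarith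
  rw [ge_iff_le, div_mul_eq_mul_div, div_le_iff₀ hn1]
  have h1 : (1/((n:ℝ)-1))*((n:ℝ)-1) = 1 := by field_simp
  nlinarith [key2, h1]
end

section
/- Let n ≥ 3 be an integer and let x_1, …, x_n be nonnegative real numbers with x_1 + ⋯ + x_n = 1. Then equality holds in the inequality n·∑_{i=1}^n x_i³ + 1/(n-1) = ((2n-1)/(n-1))·∑_{i=1}^n x_i² if and only if either x_i = 1/n for all i, or there exists an index i₀ such that x_{i₀} = 0 and x_i = 1/(n-1) for all i ≠ i₀. -/
/-!
Clearing the denominator `n - 1` and using `∑ xᵢ = 1` to homogenise, the equation becomes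
`F = 0` for `F = n(n-1) ∑ xᵢ³ + (∑ xᵢ)³ - (2n-1) (∑ xᵢ) (∑ xᵢ²)`, and `3F` is the sum of Schur's
expression `a(a-b)(a-c) + b(b-a)(b-c) + c(c-a)(c-b)` over the ordered triples of distinct
indices. Every term is nonnegative by Schur's inequality, so `F = 0` puts every triple in the
equality case of Schur: three positive entries coincide, and a zero entry forces the other two
to be equal. Hence either all `xᵢ` are equal, or one vanishes and the others are equal, and
`∑ xᵢ = 1` determines the common value.
-/

open Finset

variable {R : Type*}

section CommRing

variable [CommRing R]

def schur (a b c : R) : R := a * (a - b) * (a - c) + b * (b - a) * (b - c) + c * (c - a) * (c - b)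

lemma schur_rotate (a b c : R) : schur a b c = schur b c a := by unfold schur; ring

lemma schur_eq_sq_mul_add (a b c : R) :
    schur a b c = (a - b) ^ 2 * (a + b - c) + c * (a - c) * (b - c) := by unfold schur; ring

lemma schur_zero_left (b c : R) : schur 0 b c = (b - c) ^ 2 * (b + c) := by unfold schur; ring

variable {ι : Type*} [Fintype ι]

lemma sum_schur (x : ι → R) :
    ∑ i, ∑ j, ∑ k, schur (x i) (x j) (x k) =
      3 * ((Fintype.card ι : R) ^ 2 * ∑ i, x i ^ 3
        - 2 * Fintype.card ι * (∑ i, x i) * ∑ i, x i ^ 2 + (∑ i, x i) ^ 3) := by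
  have h (a b c : R) : schur a b c = a ^ 3 + b ^ 3 + c ^ 3 - (a ^ 2 * b + a ^ 2 * c + b ^ 2 * a
      + b ^ 2 * c + c ^ 2 * a + c ^ 2 * b) + 3 * (a * b * c) := by unfold schur; ring
  simp only [h, sum_add_distrib, sum_sub_distrib, sum_const, card_univ, nsmul_eq_mul,
    ← mul_sum, ← sum_mul]
  ring

lemma sum_schur_diag (x : ι → R) :
    ∑ i, ∑ j, schur (x i) (x i) (x j) =
      Fintype.card ι * ∑ i, x i ^ 3 - (∑ i, x i) * ∑ i, x i ^ 2 := by
  have h (a c : R) : schur a a c = c ^ 3 - 2 * (c ^ 2 * a) + c * a ^ 2 := by unfold schur; ring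
  simp only [h, sum_add_distrib, sum_sub_distrib, ← mul_sum, ← sum_mul, sum_const, card_univ,
    nsmul_eq_mul]
  ring

variable [DecidableEq ι]

lemma sum_schur_distinct (x : ι → R) :
    ∑ i, ∑ j, ∑ k, (if i ≠ j ∧ j ≠ k ∧ i ≠ k then schur (x i) (x j) (x k) else 0) =
      3 * ((Fintype.card ι : R) * (Fintype.card ι - 1) * ∑ i, x i ^ 3 + (∑ i, x i) ^ 3
        - (2 * Fintype.card ι - 1) * (∑ i, x i) * ∑ i, x i ^ 2) := by
  -- Inclusion-exclusion over the diagonals `i = j`, `j = k`, `i = k`; the triple diagonal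
  -- needs no correction since `schur a a a = 0`.
  have h (i j k : ι) : (if i ≠ j ∧ j ≠ k ∧ i ≠ k then schur (x i) (x j) (x k) else 0) =
      schur (x i) (x j) (x k) - (if i = j then schur (x i) (x i) (x k) else 0)
        - (if j = k then schur (x j) (x j) (x i) else 0)
        - (if i = k then schur (x i) (x i) (x j) else 0) := by
    by_cases hij : i = j <;> by_cases hjk : j = k <;> by_cases hik : i = k <;> simp_all [schur]
  simp only [h, sum_sub_distrib, sum_schur, sum_ite_irrel, sum_const_zero, sum_ite_eq, mem_univ,
    if_true]
  rw [sum_comm (f := fun i j ↦ schur (x j) (x j) (x i)), sum_schur_diag]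
  ring

lemma sum_eq_card_sub_one_mul_of_eq_off {f : ι → R} {c : R} {i₀ : ι} (h₀ : f i₀ = 0)
    (h : ∀ i, i ≠ i₀ → f i = c) : ∑ i, f i = (Fintype.card ι - 1) * c := by
  rw [← sum_erase_add _ _ (mem_univ i₀), h₀, add_zero,
    sum_congr rfl fun i hi ↦ h i (ne_of_mem_erase hi), sum_const, card_erase_of_mem (mem_univ i₀),
    card_univ, nsmul_eq_mul, Nat.cast_pred (Fintype.card_pos_iff.2 ⟨i₀⟩)]

end CommRing

section LinearOrder

variable [CommRing R] [LinearOrder R] [IsStrictOrderedRing R]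

lemma schur_nonneg_of_min {a b c : R} (hc : 0 ≤ c) (hca : c ≤ a) (hcb : c ≤ b) :
    0 ≤ schur a b c := by
  rw [schur_eq_sq_mul_add]
  have := mul_nonneg (mul_nonneg hc (sub_nonneg.2 hca)) (sub_nonneg.2 hcb)
  nlinarith [sq_nonneg (a - b)]

lemma schur_nonneg {a b c : R} (ha : 0 ≤ a) (hb : 0 ≤ b) (hc : 0 ≤ c) : 0 ≤ schur a b c := by
  rcases le_total c a with hca | hac <;> rcases le_total c b with hcb | hbc
  · exact schur_nonneg_of_min hc hca hcb
  · rw [schur_rotate, schur_rotate]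
    exact schur_nonneg_of_min hb hbc (hbc.trans hca)
  · rw [schur_rotate]
    exact schur_nonneg_of_min ha (hac.trans hcb) hac
  · rcases le_total a b with hab | hba
    · rw [schur_rotate]; exact schur_nonneg_of_min ha hab hac
    · rw [schur_rotate, schur_rotate]; exact schur_nonneg_of_min hb hbc hba

lemma eq_and_eq_of_schur_eq_zero_of_min {a b c : R} (hc : 0 < c) (hca : c ≤ a) (hcb : c ≤ b)
    (h : schur a b c = 0) : a = b ∧ b = c := by
  rw [schur_eq_sq_mul_add] at h
  have h₁ : 0 ≤ (a - b) ^ 2 * (a + b - c) := mul_nonneg (sq_nonneg _) (by linarith)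
  have h₂ : 0 ≤ c * (a - c) * (b - c) :=
    mul_nonneg (mul_nonneg hc.le (sub_nonneg.2 hca)) (sub_nonneg.2 hcb)
  have hab : a = b := by
    have : (a - b) ^ 2 * (a + b - c) = 0 := by linarith
    rcases mul_eq_zero.1 this with h | h
    · exact sub_eq_zero.1 (pow_eq_zero_iff two_ne_zero |>.1 h)
    · linarith
  subst hab
  have : c * (a - c) ^ 2 = 0 := by linarith
  have hac : (a - c) ^ 2 = 0 := (mul_eq_zero.1 this).resolve_left hc.ne'
  exact ⟨rfl, sub_eq_zero.1 (pow_eq_zero_iff two_ne_zero |>.1 hac)⟩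

lemma eq_and_eq_of_schur_eq_zero {a b c : R} (ha : 0 < a) (hb : 0 < b) (hc : 0 < c)
    (h : schur a b c = 0) : a = b ∧ b = c := by
  rcases le_total c a with hca | hac <;> rcases le_total c b with hcb | hbc
  · exact eq_and_eq_of_schur_eq_zero_of_min hc hca hcb h
  · rw [schur_rotate, schur_rotate] at h
    obtain ⟨h₁, h₂⟩ := eq_and_eq_of_schur_eq_zero_of_min hb hbc (hbc.trans hca) h
    constructor <;> linarith
  · rw [schur_rotate] at h
    obtain ⟨h₁, h₂⟩ := eq_and_eq_of_schur_eq_zero_of_min ha (hac.trans hcb) hac h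
    constructor <;> linarith
  · rcases le_total a b with hab | hba
    · rw [schur_rotate] at h
      obtain ⟨h₁, h₂⟩ := eq_and_eq_of_schur_eq_zero_of_min ha hab hac h
      constructor <;> linarith
    · rw [schur_rotate, schur_rotate] at h
      obtain ⟨h₁, h₂⟩ := eq_and_eq_of_schur_eq_zero_of_min hb hbc hba h
      constructor <;> linarith

lemma eq_of_schur_zero_left_eq_zero {b c : R} (hb : 0 ≤ b) (hc : 0 ≤ c) (h : schur 0 b c = 0) :
    b = c := by
  rw [schur_zero_left] at h
  rcases mul_eq_zero.1 h with h | h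
  · exact sub_eq_zero.1 (pow_eq_zero_iff two_ne_zero |>.1 h)
  · linarith

variable {ι : Type*} [Fintype ι] [DecidableEq ι]

lemma schur_eq_zero_of_sum_schur_distinct_eq_zero {x : ι → R} (hx : ∀ i, 0 ≤ x i)
    (h : ∑ i, ∑ j, ∑ k, (if i ≠ j ∧ j ≠ k ∧ i ≠ k then schur (x i) (x j) (x k) else 0) = 0)
    {i j k : ι} (hij : i ≠ j) (hjk : j ≠ k) (hik : i ≠ k) : schur (x i) (x j) (x k) = 0 := by
  have hnn (i j k : ι) :
      0 ≤ if i ≠ j ∧ j ≠ k ∧ i ≠ k then schur (x i) (x j) (x k) else 0 := by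
    split_ifs
    exacts [schur_nonneg (hx i) (hx j) (hx k), le_rfl]
  have hi := (sum_eq_zero_iff_of_nonneg fun i _ ↦ sum_nonneg fun j _ ↦ sum_nonneg fun k _ ↦
    hnn i j k).1 h i (mem_univ i)
  have hj := (sum_eq_zero_iff_of_nonneg fun j _ ↦ sum_nonneg fun k _ ↦ hnn i j k).1 hi j
    (mem_univ j)
  have hk := (sum_eq_zero_iff_of_nonneg fun k _ ↦ hnn i j k).1 hj k (mem_univ k)
  simpa [hij, hjk, hik] using hk

lemma eq_or_eq_off_zero_of_schur_eq_zero (hι : 3 ≤ Fintype.card ι) {x : ι → R}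
    (hx : ∀ i, 0 ≤ x i)
    (h : ∀ i j k, i ≠ j → j ≠ k → i ≠ k → schur (x i) (x j) (x k) = 0) :
    (∀ i j, x i = x j) ∨ ∃ i₀, x i₀ = 0 ∧ ∀ i j, i ≠ i₀ → j ≠ i₀ → x i = x j := by
  by_cases hzero : ∃ i₀, x i₀ = 0
  · obtain ⟨i₀, hi₀⟩ := hzero
    refine .inr ⟨i₀, hi₀, fun i j hi hj ↦ ?_⟩
    rcases eq_or_ne i j with rfl | hij
    · rfl
    have := h i₀ i j hi.symm hij hj.symm
    rw [hi₀] at this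
    exact eq_of_schur_zero_left_eq_zero (hx i) (hx j) this
  · push Not at hzero
    have hpos i : 0 < x i := (hx i).lt_of_ne (hzero i).symm
    refine .inl fun i j ↦ ?_
    rcases eq_or_ne i j with rfl | hij
    · rfl
    have hcard : 1 < #(univ.erase i) := by rw [card_erase_of_mem (mem_univ i), card_univ]; omega
    obtain ⟨k, hk, hkj⟩ := exists_mem_ne hcard j
    exact (eq_and_eq_of_schur_eq_zero (hpos i) (hpos j) (hpos k)
      (h i j k hij hkj.symm (ne_of_mem_erase hk).symm)).1

end LinearOrder

theorem stmt_1 (n : ℕ) (hn : 3 ≤ n) (x : Fin n → ℝ)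
    (hx : ∀ i, 0 ≤ x i) (hsum : ∑ i, x i = 1) :
    (n : ℝ) * ∑ i, (x i) ^ 3 + 1 / ((n : ℝ) - 1) =
      ((2 * (n : ℝ) - 1) / ((n : ℝ) - 1)) * ∑ i, (x i) ^ 2 ↔
    (∀ i, x i = 1 / (n : ℝ)) ∨
      ∃ i₀, x i₀ = 0 ∧ ∀ i, i ≠ i₀ → x i = 1 / ((n : ℝ) - 1) := by
  have hn₀ : (n : ℝ) ≠ 0 := by positivity
  have hn₁ : (n : ℝ) - 1 ≠ 0 := sub_ne_zero.2 (by norm_cast; omega)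
  constructor
  · intro heq
    have hF : ∑ i, ∑ j, ∑ k,
        (if i ≠ j ∧ j ≠ k ∧ i ≠ k then schur (x i) (x j) (x k) else 0) = 0 := by
      rw [sum_schur_distinct, Fintype.card_fin, hsum]
      field_simp at heq
      linarith
    rcases eq_or_eq_off_zero_of_schur_eq_zero (by simpa using hn) hx
      fun i j k ↦ schur_eq_zero_of_sum_schur_distinct_eq_zero hx hF with hconst | ⟨i₀, h₀, hoff⟩
    · refine .inl fun i ↦ ?_
      rw [sum_congr rfl fun j _ ↦ hconst j i, sum_const, card_univ, Fintype.card_fin,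
        nsmul_eq_mul] at hsum
      field_simp
      linarith
    · refine .inr ⟨i₀, h₀, fun i hi ↦ ?_⟩
      rw [sum_eq_card_sub_one_mul_of_eq_off h₀ fun j hj ↦ hoff j i hj hi,
        Fintype.card_fin] at hsum
      field_simp
      linarith
  · rintro (hconst | ⟨i₀, h₀, hoff⟩)
    · simp only [hconst, sum_const, card_univ, Fintype.card_fin, nsmul_eq_mul]
      field_simp
      ring
    · have hpow (k : ℕ) (hk : k ≠ 0) : ∑ i, x i ^ k = (n - 1) * (1 / ((n : ℝ) - 1)) ^ k := by
        rw [sum_eq_card_sub_one_mul_of_eq_off (i₀ := i₀) (by simp [h₀, hk])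
          fun i hi ↦ by rw [hoff i hi], Fintype.card_fin]
      rw [hpow 3 three_ne_zero, hpow 2 two_ne_zero]
      field_simp
      ring
end

section
/- Let n ≥ 3 be an integer and let λ_1, …, λ_n be nonnegative real numbers. Then n(n-1)·∑_{i=1}^n λ_i³ + (∑_{i=1}^n λ_i)³ ≥ (2n-1)·(∑_{i=1}^n λ_i)·(∑_{i=1}^n λ_i²). -/
lemma schur3 {x y z : ℝ} (hx : 0 ≤ x) (hy : 0 ≤ y) (hz : 0 ≤ z) :
    0 ≤ x*(x-y)*(x-z) + y*(y-z)*(y-x) + z*(z-x)*(z-y) := by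
  rcases le_total x y with h1 | h1 <;> rcases le_total y z with h2 | h2 <;>
    rcases le_total x z with h3 | h3 <;>
    nlinarith [mul_nonneg hx (sq_nonneg (x-y)), mul_nonneg hy (sq_nonneg (y-z)),
      mul_nonneg hz (sq_nonneg (z-x)), mul_nonneg hx (sq_nonneg (x-z)),
      mul_nonneg hy (sq_nonneg (x-y)), mul_nonneg hz (sq_nonneg (y-z)),
      mul_nonneg (mul_nonneg hx hy) hz]

theorem stmt_2 (n : ℕ) (hn : 3 ≤ n) (l : Fin n → ℝ) (hl : ∀ i, 0 ≤ l i) :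
    (n : ℝ) * ((n : ℝ) - 1) * ∑ i, (l i) ^ 3 + (∑ i, l i) ^ 3 ≥
      (2 * (n : ℝ) - 1) * (∑ i, l i) * ∑ i, (l i) ^ 2 := by
  set S := ∑ i, l i with hS
  set Q := ∑ i, (l i)^2 with hQ
  set P := ∑ i, (l i)^3 with hP
  set F : Fin n → Fin n → Fin n → ℝ := fun i j k =>
    l i * (l i - l j) * (l i - l k) - (if j = k then l i * (l i - l j)^2 else 0) with hF
  have hcard : ((Finset.univ : Finset (Fin n)).card : ℝ) = n := by simp
  -- pointwise nonnegativity of the cyclic symmetrization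
  have hpt : ∀ i j k, 0 ≤ F i j k + F j k i + F k i j := by
    intro i j k
    by_cases hij : i = j
    · subst hij
      by_cases hik : i = k
      · subst hik; simp [hF]
      · simp [hF, hik, Ne.symm hik]; ring_nf; exact le_refl _
    · by_cases hik : i = k
      · subst hik
        simp [hF, hij, Ne.symm hij]; ring_nf; exact le_refl _
      · by_cases hjk : j = k
        · subst hjk
          simp [hF, hij, hik]; ring_nf; exact le_refl _
        · simp only [hF, if_neg hjk, if_neg (fun h => hik (h ▸ rfl) : ¬ k = i),
            if_neg (fun h => hij (h ▸ rfl) : ¬ i = j)]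
          have := schur3 (hl i) (hl j) (hl k)
          nlinarith [this]
  -- reindexing: cyclic shifts give the same triple sum
  have hcyc1 : (∑ i, ∑ j, ∑ k, F j k i) = ∑ i, ∑ j, ∑ k, F i j k := by
    rw [Finset.sum_comm]
    exact Finset.sum_congr rfl fun j _ => Finset.sum_comm
  have hcyc2 : (∑ i, ∑ j, ∑ k, F k i j) = ∑ i, ∑ j, ∑ k, F i j k := by
    refine Eq.trans (Finset.sum_congr rfl fun i _ => Finset.sum_comm) ?_
    exact Finset.sum_comm
  -- nonnegativity of the triple sum
  have hV : 0 ≤ ∑ i, ∑ j, ∑ k, F i j k := by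
    have h3 : 0 ≤ ∑ i, ∑ j, ∑ k, (F i j k + F j k i + F k i j) :=
      Finset.sum_nonneg fun i _ => Finset.sum_nonneg fun j _ =>
        Finset.sum_nonneg fun k _ => hpt i j k
    simp only [Finset.sum_add_distrib] at h3
    rw [hcyc1, hcyc2] at h3
    linarith
  -- compute the triple sum
  have hsum1 : ∀ x : ℝ, (∑ j, (x - l j)) = n * x - S := by
    intro x
    rw [Finset.sum_sub_distrib, Finset.sum_const, nsmul_eq_mul]
    simp [hS]
  have hsum2 : ∀ x : ℝ, (∑ j, (x - l j)^2) = n * x^2 - 2*x*S + Q := by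
    intro x
    have : ∀ j : Fin n, (x - l j)^2 = x^2 - 2*x*(l j) + (l j)^2 := fun j => by ring
    simp only [this]
    rw [Finset.sum_add_distrib, Finset.sum_sub_distrib, Finset.sum_const, nsmul_eq_mul,
      ← Finset.mul_sum]
    simp [hS, hQ]
  have hval : (∑ i, ∑ j, ∑ k, F i j k)
      = (n:ℝ) * ((n:ℝ) - 1) * P + S^3 - (2*(n:ℝ) - 1) * S * Q := by
    have e1 : ∀ i j : Fin n, (∑ k, F i j k)
        = l i * (l i - l j) * ((n:ℝ) * l i - S) - l i * (l i - l j)^2 := by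
      intro i j
      rw [hF]
      simp only
      rw [Finset.sum_sub_distrib]
      congr 1
      · rw [← Finset.mul_sum, hsum1 (l i)]
      · simp
    have e2 : ∀ i : Fin n, (∑ j, (l i * (l i - l j) * ((n:ℝ) * l i - S) - l i * (l i - l j)^2))
        = l i * ((n:ℝ) * l i - S)^2 - l i * ((n:ℝ) * (l i)^2 - 2*(l i)*S + Q) := by
      intro i
      rw [Finset.sum_sub_distrib]
      have r1 : ∀ j : Fin n, l i * (l i - l j) * ((n:ℝ) * l i - S)
          = (l i * ((n:ℝ) * l i - S)) * (l i - l j) := fun j => by ring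
      simp only [r1]
      rw [← Finset.mul_sum, hsum1 (l i), ← Finset.mul_sum, hsum2 (l i)]
      ring
    calc (∑ i, ∑ j, ∑ k, F i j k)
        = ∑ i, ∑ j, (l i * (l i - l j) * ((n:ℝ) * l i - S) - l i * (l i - l j)^2) :=
          Finset.sum_congr rfl fun i _ => Finset.sum_congr rfl fun j _ => e1 i j
      _ = ∑ i, (l i * ((n:ℝ) * l i - S)^2 - l i * ((n:ℝ) * (l i)^2 - 2*(l i)*S + Q)) :=
          Finset.sum_congr rfl fun i _ => e2 i
      _ = ∑ i, (((n:ℝ)^2 - n) * (l i)^3 + (2 - 2*(n:ℝ)) * S * (l i)^2 + (S^2 - Q) * (l i)) := by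
          refine Finset.sum_congr rfl fun i _ => by ring
      _ = ((n:ℝ)^2 - n) * P + (2 - 2*(n:ℝ)) * S * Q + (S^2 - Q) * S := by
          rw [Finset.sum_add_distrib, Finset.sum_add_distrib, ← Finset.mul_sum,
            ← Finset.mul_sum, ← Finset.mul_sum]
      _ = (n:ℝ) * ((n:ℝ) - 1) * P + S^3 - (2*(n:ℝ) - 1) * S * Q := by ring
  rw [hval] at hV
  linarith
end

section
/- Let x_1, x_2, x_3 be nonnegative real numbers with x_1 + x_2 + x_3 = 1. Then 3(x_1³ + x_2³ + x_3³) + 1/2 ≥ (5/2)(x_1² + x_2² + x_3²), with equality if and only if either x_1 = x_2 = x_3 = 1/3, or (up to permutation of the indices) one of the x_i is 0 and the other two both equal 1/2. -/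
lemma aux_sorted (x y z : ℝ) (hx : 0 ≤ x) (hy : 0 ≤ y) (hz : 0 ≤ z)
    (hxy : y ≤ x) (hyz : z ≤ y) (hsum : x + y + z = 1) :
    3 * (x ^ 3 + y ^ 3 + z ^ 3) + 1 / 2 ≥ 5 / 2 * (x ^ 2 + y ^ 2 + z ^ 2) ∧
    (3 * (x ^ 3 + y ^ 3 + z ^ 3) + 1 / 2 = 5 / 2 * (x ^ 2 + y ^ 2 + z ^ 2) →
      (x = 1/3 ∧ y = 1/3 ∧ z = 1/3) ∨ (z = 0 ∧ x = 1/2 ∧ y = 1/2)) := by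
  have hz1 : z = 1 - x - y := by linarith
  subst hz1
  have t1 : 0 ≤ (x - y) ^ 2 * (x + y - (1 - x - y)) := by
    apply mul_nonneg (sq_nonneg _); linarith
  have t2 : 0 ≤ (1 - x - y) * (x - (1 - x - y)) * (y - (1 - x - y)) := by
    apply mul_nonneg (mul_nonneg hz (by linarith)) (by linarith)
  constructor
  · nlinarith [t1, t2]
  · intro heq
    have key : (x - y) ^ 2 * (x + y - (1 - x - y))
        + (1 - x - y) * (x - (1 - x - y)) * (y - (1 - x - y)) = 0 := by
      linear_combination heq
    have e1 : (x - y) ^ 2 * (x + y - (1 - x - y)) = 0 := by linarith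
    have e2 : (1 - x - y) * (x - (1 - x - y)) * (y - (1 - x - y)) = 0 := by linarith
    have hxy0 : x = y := by
      rcases mul_eq_zero.mp e1 with h | h
      · have := sq_eq_zero_iff.mp h; linarith
      · -- x + y = 1 - x - y = z, but z smallest ⇒ contradiction
        nlinarith
    subst hxy0
    rcases mul_eq_zero.mp e2 with h | h
    · rcases mul_eq_zero.mp h with h' | h'
      · right; constructor; linarith; constructor <;> linarith
      · left; refine ⟨by linarith, by linarith, by linarith⟩
    · left; refine ⟨by linarith, by linarith, by linarith⟩

set_option maxHeartbeats 8000000 in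
theorem stmt_3 (x₁ x₂ x₃ : ℝ) (h1 : 0 ≤ x₁) (h2 : 0 ≤ x₂) (h3 : 0 ≤ x₃)
    (hsum : x₁ + x₂ + x₃ = 1) :
    3 * (x₁ ^ 3 + x₂ ^ 3 + x₃ ^ 3) + 1 / 2 ≥ 5 / 2 * (x₁ ^ 2 + x₂ ^ 2 + x₃ ^ 2) ∧
    (3 * (x₁ ^ 3 + x₂ ^ 3 + x₃ ^ 3) + 1 / 2 = 5 / 2 * (x₁ ^ 2 + x₂ ^ 2 + x₃ ^ 2) ↔
      (x₁ = 1 / 3 ∧ x₂ = 1 / 3 ∧ x₃ = 1 / 3) ∨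
      (x₁ = 0 ∧ x₂ = 1 / 2 ∧ x₃ = 1 / 2) ∨
      (x₂ = 0 ∧ x₁ = 1 / 2 ∧ x₃ = 1 / 2) ∨
      (x₃ = 0 ∧ x₁ = 1 / 2 ∧ x₂ = 1 / 2)) := by
  have rev : ((x₁ = 1 / 3 ∧ x₂ = 1 / 3 ∧ x₃ = 1 / 3) ∨
      (x₁ = 0 ∧ x₂ = 1 / 2 ∧ x₃ = 1 / 2) ∨
      (x₂ = 0 ∧ x₁ = 1 / 2 ∧ x₃ = 1 / 2) ∨
      (x₃ = 0 ∧ x₁ = 1 / 2 ∧ x₂ = 1 / 2)) →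
      3 * (x₁ ^ 3 + x₂ ^ 3 + x₃ ^ 3) + 1 / 2 = 5 / 2 * (x₁ ^ 2 + x₂ ^ 2 + x₃ ^ 2) := by
    rintro (⟨a, b, c⟩ | ⟨a, b, c⟩ | ⟨a, b, c⟩ | ⟨a, b, c⟩) <;> subst a <;> subst b <;> subst c <;> norm_num
  rcases le_total x₁ x₂ with hab | hab <;> rcases le_total x₂ x₃ with hbc | hbc <;> rcases le_total x₁ x₃ with hac | hac
  · obtain ⟨hi, hf⟩ := aux_sorted x₃ x₂ x₁ h3 h2 h1 (by linarith) (by linarith) (by linarith)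
    refine ⟨by linarith, ⟨fun heq => ?_, rev⟩⟩
    rcases hf (by linarith) with ⟨a, b, c⟩ | ⟨a, b, c⟩
    · exact Or.inl ⟨by linarith, by linarith, by linarith⟩
    · exact Or.inr (Or.inl ⟨by linarith, by linarith, by linarith⟩)
  · obtain ⟨hi, hf⟩ := aux_sorted x₃ x₂ x₁ h3 h2 h1 (by linarith) (by linarith) (by linarith)
    refine ⟨by linarith, ⟨fun heq => ?_, rev⟩⟩
    rcases hf (by linarith) with ⟨a, b, c⟩ | ⟨a, b, c⟩
    · exact Or.inl ⟨by linarith, by linarith, by linarith⟩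
    · exact Or.inr (Or.inl ⟨by linarith, by linarith, by linarith⟩)
  · obtain ⟨hi, hf⟩ := aux_sorted x₂ x₃ x₁ h2 h3 h1 (by linarith) (by linarith) (by linarith)
    refine ⟨by linarith, ⟨fun heq => ?_, rev⟩⟩
    rcases hf (by linarith) with ⟨a, b, c⟩ | ⟨a, b, c⟩
    · exact Or.inl ⟨by linarith, by linarith, by linarith⟩
    · exact Or.inr (Or.inl ⟨by linarith, by linarith, by linarith⟩)
  · obtain ⟨hi, hf⟩ := aux_sorted x₂ x₁ x₃ h2 h1 h3 (by linarith) (by linarith) (by linarith)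
    refine ⟨by linarith, ⟨fun heq => ?_, rev⟩⟩
    rcases hf (by linarith) with ⟨a, b, c⟩ | ⟨a, b, c⟩
    · exact Or.inl ⟨by linarith, by linarith, by linarith⟩
    · exact Or.inr (Or.inr (Or.inr ⟨by linarith, by linarith, by linarith⟩))
  · obtain ⟨hi, hf⟩ := aux_sorted x₃ x₁ x₂ h3 h1 h2 (by linarith) (by linarith) (by linarith)
    refine ⟨by linarith, ⟨fun heq => ?_, rev⟩⟩
    rcases hf (by linarith) with ⟨a, b, c⟩ | ⟨a, b, c⟩
    · exact Or.inl ⟨by linarith, by linarith, by linarith⟩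
    · exact Or.inr (Or.inr (Or.inl ⟨by linarith, by linarith, by linarith⟩))
  · obtain ⟨hi, hf⟩ := aux_sorted x₁ x₃ x₂ h1 h3 h2 (by linarith) (by linarith) (by linarith)
    refine ⟨by linarith, ⟨fun heq => ?_, rev⟩⟩
    rcases hf (by linarith) with ⟨a, b, c⟩ | ⟨a, b, c⟩
    · exact Or.inl ⟨by linarith, by linarith, by linarith⟩
    · exact Or.inr (Or.inr (Or.inl ⟨by linarith, by linarith, by linarith⟩))
  · obtain ⟨hi, hf⟩ := aux_sorted x₁ x₂ x₃ h1 h2 h3 (by linarith) (by linarith) (by linarith)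
    refine ⟨by linarith, ⟨fun heq => ?_, rev⟩⟩
    rcases hf (by linarith) with ⟨a, b, c⟩ | ⟨a, b, c⟩
    · exact Or.inl ⟨by linarith, by linarith, by linarith⟩
    · exact Or.inr (Or.inr (Or.inr ⟨by linarith, by linarith, by linarith⟩))
  · obtain ⟨hi, hf⟩ := aux_sorted x₁ x₂ x₃ h1 h2 h3 (by linarith) (by linarith) (by linarith)
    refine ⟨by linarith, ⟨fun heq => ?_, rev⟩⟩
    rcases hf (by linarith) with ⟨a, b, c⟩ | ⟨a, b, c⟩
    · exact Or.inl ⟨by linarith, by linarith, by linarith⟩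
    · exact Or.inr (Or.inr (Or.inr ⟨by linarith, by linarith, by linarith⟩))
end

section
/- Let n ≥ 3 be an integer and let x_1, …, x_{n-1} be nonnegative real numbers with x_1 + ⋯ + x_{n-1} = 1. Then n·∑_{i=1}^{n-1} x_i³ + 1/(n-1) ≥ ((2n-1)/(n-1))·∑_{i=1}^{n-1} x_i², with equality if and only if x_i = 1/(n-1) for all i = 1, …, n-1. -/
theorem stmt_5 (n : ℕ) (hn : 3 ≤ n) (x : Fin (n - 1) → ℝ)
    (hx : ∀ i, 0 ≤ x i) (hsum : ∑ i, x i = 1) :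
    (n : ℝ) * ∑ i, (x i) ^ 3 + 1 / ((n : ℝ) - 1) ≥
      ((2 * (n : ℝ) - 1) / ((n : ℝ) - 1)) * ∑ i, (x i) ^ 2 ∧
    ((n : ℝ) * ∑ i, (x i) ^ 3 + 1 / ((n : ℝ) - 1) =
        ((2 * (n : ℝ) - 1) / ((n : ℝ) - 1)) * ∑ i, (x i) ^ 2 ↔
      ∀ i, x i = 1 / ((n : ℝ) - 1)) := by
  have hn3 : (3:ℝ) ≤ (n:ℝ) := by exact_mod_cast hn
  have hpos : (0:ℝ) < (n:ℝ) - 1 := by linarith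
  have hne : (n:ℝ) - 1 ≠ 0 := ne_of_gt hpos
  have hnpos : (0:ℝ) < (n:ℝ) := by linarith
  have hnne : (n:ℝ) ≠ 0 := ne_of_gt hnpos
  have hm : ((n - 1 : ℕ) : ℝ) = (n:ℝ) - 1 := by
    have h1 : 1 ≤ n := by omega
    push_cast [Nat.cast_sub h1]; ring
  have key : ∀ y : ℝ,
      (n:ℝ) * y ^ 3 - ((2 * (n:ℝ) - 1) / ((n:ℝ) - 1)) * y ^ 2
        - (((2:ℝ) - (n:ℝ)) / ((n:ℝ) - 1) ^ 2) * y + 1 / ((n:ℝ) - 1) ^ 3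
      = (n:ℝ) * (y - 1 / ((n:ℝ) - 1)) ^ 2 * (y + 1 / ((n:ℝ) * ((n:ℝ) - 1))) := by
    intro y; field_simp; ring
  have hE : (n:ℝ) * ∑ i, (x i) ^ 3 + 1 / ((n:ℝ) - 1)
      - ((2 * (n:ℝ) - 1) / ((n:ℝ) - 1)) * ∑ i, (x i) ^ 2
      = ∑ i, (n:ℝ) * (x i - 1 / ((n:ℝ) - 1)) ^ 2 * (x i + 1 / ((n:ℝ) * ((n:ℝ) - 1))) := by
    have h1 : ∑ i, (n:ℝ) * (x i - 1 / ((n:ℝ) - 1)) ^ 2 * (x i + 1 / ((n:ℝ) * ((n:ℝ) - 1)))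
        = ∑ i, ((n:ℝ) * (x i) ^ 3 - ((2 * (n:ℝ) - 1) / ((n:ℝ) - 1)) * (x i) ^ 2
          - (((2:ℝ) - (n:ℝ)) / ((n:ℝ) - 1) ^ 2) * (x i) + 1 / ((n:ℝ) - 1) ^ 3) :=
      Finset.sum_congr rfl fun i _ => (key (x i)).symm
    rw [h1]
    rw [Finset.sum_add_distrib, Finset.sum_sub_distrib, Finset.sum_sub_distrib,
      ← Finset.mul_sum, ← Finset.mul_sum, ← Finset.mul_sum, hsum,
      Finset.sum_const, Finset.card_univ, Fintype.card_fin, nsmul_eq_mul, hm]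
    field_simp
    ring
  have hterm : ∀ i, 0 ≤ (n:ℝ) * (x i - 1 / ((n:ℝ) - 1)) ^ 2 * (x i + 1 / ((n:ℝ) * ((n:ℝ) - 1))) := by
    intro i
    have h1 : (0:ℝ) < 1 / ((n:ℝ) * ((n:ℝ) - 1)) := by positivity
    have h2 := hx i
    have : (0:ℝ) ≤ x i + 1 / ((n:ℝ) * ((n:ℝ) - 1)) := by linarith
    positivity
  have hsumE : 0 ≤ ∑ i, (n:ℝ) * (x i - 1 / ((n:ℝ) - 1)) ^ 2 * (x i + 1 / ((n:ℝ) * ((n:ℝ) - 1))) :=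
    Finset.sum_nonneg fun i _ => hterm i
  constructor
  · linarith
  · constructor
    · intro heq
      have hzero : ∑ i, (n:ℝ) * (x i - 1 / ((n:ℝ) - 1)) ^ 2 * (x i + 1 / ((n:ℝ) * ((n:ℝ) - 1))) = 0 := by
        linarith
      have hall := (Finset.sum_eq_zero_iff_of_nonneg (fun i _ => hterm i)).mp hzero
      intro i
      have hi := hall i (Finset.mem_univ i)
      have h3 : (0:ℝ) < x i + 1 / ((n:ℝ) * ((n:ℝ) - 1)) := by
        have h1 : (0:ℝ) < 1 / ((n:ℝ) * ((n:ℝ) - 1)) := by positivity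
        have := hx i; linarith
      have hsq : (x i - 1 / ((n:ℝ) - 1)) ^ 2 = 0 := by
        rcases mul_eq_zero.mp hi with h | h
        · rcases mul_eq_zero.mp h with h' | h'
          · exact absurd h' hnne
          · exact h'
        · exact absurd h (ne_of_gt h3)
      have := pow_eq_zero_iff (n := 2) (by norm_num) |>.mp hsq
      linarith
    · intro hall
      have : ∀ i ∈ Finset.univ, (n:ℝ) * (x i - 1 / ((n:ℝ) - 1)) ^ 2 * (x i + 1 / ((n:ℝ) * ((n:ℝ) - 1))) = 0 := by
        intro i _; rw [hall i]; ring
      have hz := Finset.sum_eq_zero this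
      linarith
end

section
/- Let (X, μ) be a measure space with 0 < μ(X) < ∞, let n ≥ 4 be an integer, and let f : X → ℝ be measurable with exp((n+1)·f) and exp((n-3)·f) integrable. Let C₁, C₂ > 0 be real constants such that C₂·∫_X exp((n+1)f) dμ ≤ C₁·∫_X exp((n-3)f) dμ. Then ∫_X exp((n+1)f) dμ ≤ (C₁/C₂)^{(n+1)/4} · μ(X). -/
open MeasureTheory

/-!
Write `I = ∫ exp((n+1)f)`, `J = ∫ exp((n-3)f)` and `M = μ(X)`. Hölder's inequality with the
conjugate exponents `p = (n+1)/(n-3)` and `q = (n+1)/4`, applied to `exp((n-3)f)` and `1`, gives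
`J ≤ I^(1/p) M^(1/q)`. Combined with `C₂ I ≤ C₁ J` this yields
`I ≤ (C₁/C₂) I^(1/p) M^(1/q)`; cancelling `I^(1/p)` and raising to the power `q` gives
`I ≤ (C₁/C₂)^q M`.
-/

theorem integral_le_integral_rpow_mul_measureReal_univ {X : Type*} [MeasurableSpace X]
    {μ : Measure X} [IsFiniteMeasure μ] {p q : ℝ} (hpq : p.HolderConjugate q) {g : X → ℝ}
    (hg_nonneg : 0 ≤ᵐ[μ] g) (hg : AEStronglyMeasurable g μ)
    (hgp : Integrable (fun x => g x ^ p) μ) :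
    ∫ x, g x ∂μ ≤ (∫ x, g x ^ p ∂μ) ^ (1 / p) * μ.real Set.univ ^ (1 / q) := by
  have hg_memLp : MemLp g (ENNReal.ofReal p) μ := by
    refine (integrable_norm_rpow_iff hg (by simpa using hpq.pos) ENNReal.ofReal_ne_top).1 ?_
    rw [ENNReal.toReal_ofReal hpq.nonneg]
    refine hgp.congr ?_
    filter_upwards [hg_nonneg] with x hx
    rw [Real.norm_of_nonneg hx]
  simpa using integral_mul_le_Lp_mul_Lq_of_nonneg hpq hg_nonneg
    (Filter.Eventually.of_forall fun _ => zero_le_one) hg_memLp (memLp_const (1 : ℝ))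

theorem le_rpow_mul_of_le_mul_rpow_mul_rpow {p q c x m : ℝ} (hpq : p.HolderConjugate q)
    (hc : 0 ≤ c) (hx : 0 ≤ x) (hm : 0 ≤ m) (h : x ≤ c * (x ^ (1 / p) * m ^ (1 / q))) :
    x ≤ c ^ q * m := by
  rcases hx.eq_or_lt with rfl | hx
  · positivity
  have hq := hpq.symm.pos
  have hsplit : x = x ^ (1 / p) * x ^ (1 / q) := by
    rw [← Real.rpow_add hx, one_div, one_div, hpq.inv_add_inv_eq_one, Real.rpow_one]
  have hroot : x ^ (1 / q) ≤ c * m ^ (1 / q) := by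
    refine le_of_mul_le_mul_left ?_ (Real.rpow_pos_of_pos hx (1 / p))
    calc x ^ (1 / p) * x ^ (1 / q) = x := hsplit.symm
      _ ≤ x ^ (1 / p) * (c * m ^ (1 / q)) := by linarith
  calc x = (x ^ (1 / q)) ^ q := by
        rw [← Real.rpow_mul hx.le, one_div_mul_cancel hq.ne', Real.rpow_one]
    _ ≤ (c * m ^ (1 / q)) ^ q := by gcongr
    _ = c ^ q * m := by
      rw [Real.mul_rpow hc (by positivity), ← Real.rpow_mul hm, one_div_mul_cancel hq.ne',
        Real.rpow_one]

theorem stmt_14_general {X : Type*} [MeasurableSpace X] (μ : Measure X)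
    (hμfin : μ Set.univ < ⊤)
    (n : ℕ) (hn : 4 ≤ n) (f : X → ℝ)
    (hint1 : Integrable (fun x => Real.exp (((n : ℝ) + 1) * f x)) μ)
    (hint2 : Integrable (fun x => Real.exp (((n : ℝ) - 3) * f x)) μ)
    (C₁ C₂ : ℝ) (hC₁ : 0 < C₁) (hC₂ : 0 < C₂)
    (hle : C₂ * ∫ x, Real.exp (((n : ℝ) + 1) * f x) ∂μ ≤
      C₁ * ∫ x, Real.exp (((n : ℝ) - 3) * f x) ∂μ) :
    ∫ x, Real.exp (((n : ℝ) + 1) * f x) ∂μ ≤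
      (C₁ / C₂) ^ (((n : ℝ) + 1) / 4) * (μ Set.univ).toReal := by
  have : IsFiniteMeasure μ := ⟨hμfin⟩
  have hn3 : (0 : ℝ) < n - 3 := by
    have : (4 : ℝ) ≤ n := by exact_mod_cast hn
    linarith
  have hpq : Real.HolderConjugate ((n + 1) / (n - 3)) ((n + 1) / 4) := by
    rw [Real.holderConjugate_iff, one_lt_div hn3, inv_div, inv_div]
    constructor
    · linarith
    · field_simp
      ring
  have hpow (x : X) :
      Real.exp ((n - 3) * f x) ^ ((n + 1) / (n - 3) : ℝ) = Real.exp ((n + 1) * f x) := by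
    rw [← Real.exp_mul]
    field_simp
  have holder := integral_le_integral_rpow_mul_measureReal_univ hpq
    (Filter.Eventually.of_forall fun x => (Real.exp_pos _).le) hint2.1
    (by simpa only [hpow] using hint1)
  simp only [hpow] at holder
  refine le_rpow_mul_of_le_mul_rpow_mul_rpow hpq (by positivity)
    (integral_nonneg fun x => (Real.exp_pos _).le) measureReal_nonneg ?_
  rw [div_mul_eq_mul_div, le_div_iff₀ hC₂, mul_comm]
  exact hle.trans (mul_le_mul_of_nonneg_left holder hC₁.le)

theorem stmt_14 {X : Type*} [MeasurableSpace X] (μ : Measure X)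
    (hμ0 : 0 < μ Set.univ) (hμfin : μ Set.univ < ⊤)
    (n : ℕ) (hn : 4 ≤ n) (f : X → ℝ) (hf : Measurable f)
    (hint1 : Integrable (fun x => Real.exp (((n : ℝ) + 1) * f x)) μ)
    (hint2 : Integrable (fun x => Real.exp (((n : ℝ) - 3) * f x)) μ)
    (C₁ C₂ : ℝ) (hC₁ : 0 < C₁) (hC₂ : 0 < C₂)
    (hle : C₂ * ∫ x, Real.exp (((n : ℝ) + 1) * f x) ∂μ ≤
      C₁ * ∫ x, Real.exp (((n : ℝ) - 3) * f x) ∂μ) :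
    ∫ x, Real.exp (((n : ℝ) + 1) * f x) ∂μ ≤
      (C₁ / C₂) ^ (((n : ℝ) + 1) / 4) * (μ Set.univ).toReal :=
  stmt_14_general μ hμfin n hn f hint1 hint2 C₁ C₂ hC₁ hC₂ hle
end

section
/- Let (X, μ) be a measure space with 0 < μ(X) < ∞, let n ≥ 4 be an integer, and let f : X → ℝ be measurable such that exp(-f), exp(f), exp(3f), exp((n-3)f) and exp((n+1)f) are all integrable. Suppose there exist real constants C₁, C₂ > 0 with C₁·∫_X exp(-f) dμ ≤ C₂·∫_X exp(3f) dμ and C₂·∫_X exp((n+1)f) dμ ≤ C₁·∫_X exp((n-3)f) dμ. Then f is almost everywhere constant, i.e., there exists c ∈ ℝ with f = c μ-almost everywhere. -/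
open MeasureTheory

private lemma cosh_helper (c x : ℝ) :
    Real.exp (c + x) + Real.exp (c - x) = Real.exp c * (2 * Real.cosh x) := by
  rw [Real.cosh_eq, Real.exp_add, sub_eq_add_neg, Real.exp_add, Real.exp_neg]
  have := (Real.exp_pos x).ne'
  field_simp

private lemma cosh_helper' (c x : ℝ) :
    Real.exp (c - x) + Real.exp (c + x) = Real.exp c * (2 * Real.cosh x) := by
  rw [add_comm, cosh_helper]

private lemma key_le (N a b : ℝ) (hN : 4 ≤ N) :
    Real.exp (3*a) * Real.exp ((N-3)*b) + Real.exp (3*b) * Real.exp ((N-3)*a)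
      ≤ Real.exp (-a) * Real.exp ((N+1)*b) + Real.exp (-b) * Real.exp ((N+1)*a) := by
  rw [← Real.exp_add, ← Real.exp_add, ← Real.exp_add, ← Real.exp_add]
  have e1 : 3*a + (N-3)*b = N*((a+b)/2) + (6-N)*((a-b)/2) := by ring
  have e2 : 3*b + (N-3)*a = N*((a+b)/2) - (6-N)*((a-b)/2) := by ring
  have e3 : -a + (N+1)*b = N*((a+b)/2) - (N+2)*((a-b)/2) := by ring
  have e4 : -b + (N+1)*a = N*((a+b)/2) + (N+2)*((a-b)/2) := by ring
  rw [e1, e2, e3, e4, cosh_helper, cosh_helper']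
  have habs : |6 - N| ≤ |N + 2| := by
    rw [abs_of_nonneg (by linarith : (0:ℝ) ≤ N + 2)]
    exact abs_le.2 ⟨by linarith, by linarith⟩
  have hc : Real.cosh ((6-N)*((a-b)/2)) ≤ Real.cosh ((N+2)*((a-b)/2)) := by
    rw [Real.cosh_le_cosh, abs_mul, abs_mul]
    exact mul_le_mul_of_nonneg_right habs (abs_nonneg _)
  have := (Real.exp_pos (N*((a+b)/2))).le
  nlinarith

private lemma key_lt (N a b : ℝ) (hN : 4 ≤ N) (hne : a ≠ b) :
    Real.exp (3*a) * Real.exp ((N-3)*b) + Real.exp (3*b) * Real.exp ((N-3)*a)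
      < Real.exp (-a) * Real.exp ((N+1)*b) + Real.exp (-b) * Real.exp ((N+1)*a) := by
  rw [← Real.exp_add, ← Real.exp_add, ← Real.exp_add, ← Real.exp_add]
  have e1 : 3*a + (N-3)*b = N*((a+b)/2) + (6-N)*((a-b)/2) := by ring
  have e2 : 3*b + (N-3)*a = N*((a+b)/2) - (6-N)*((a-b)/2) := by ring
  have e3 : -a + (N+1)*b = N*((a+b)/2) - (N+2)*((a-b)/2) := by ring
  have e4 : -b + (N+1)*a = N*((a+b)/2) + (N+2)*((a-b)/2) := by ring
  rw [e1, e2, e3, e4, cosh_helper, cosh_helper']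
  have hd : 0 < |(a-b)/2| := by
    rw [abs_pos]
    intro h
    exact hne (by linarith [sub_eq_zero.1 (by linarith : a - b = 0)])
  have habs : |6 - N| < |N + 2| := by
    rw [abs_of_nonneg (by linarith : (0:ℝ) ≤ N + 2)]
    exact abs_lt.2 ⟨by linarith, by linarith⟩
  have hc : Real.cosh ((6-N)*((a-b)/2)) < Real.cosh ((N+2)*((a-b)/2)) := by
    rw [Real.cosh_lt_cosh, abs_mul, abs_mul]
    exact mul_lt_mul_of_pos_right habs hd
  have := Real.exp_pos (N*((a+b)/2))
  nlinarith

theorem stmt_15 {X : Type*} [MeasurableSpace X] (μ : Measure X)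
    (hμ0 : 0 < μ Set.univ) (hμfin : μ Set.univ < ⊤)
    (n : ℕ) (hn : 4 ≤ n) (f : X → ℝ) (hf : Measurable f)
    (hint0 : Integrable (fun x => Real.exp (-f x)) μ)
    (hint1 : Integrable (fun x => Real.exp (f x)) μ)
    (hint3 : Integrable (fun x => Real.exp (3 * f x)) μ)
    (hintm : Integrable (fun x => Real.exp (((n : ℝ) - 3) * f x)) μ)
    (hintp : Integrable (fun x => Real.exp (((n : ℝ) + 1) * f x)) μ)
    (C₁ C₂ : ℝ) (hC₁ : 0 < C₁) (hC₂ : 0 < C₂)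
    (h1 : C₁ * ∫ x, Real.exp (-f x) ∂μ ≤ C₂ * ∫ x, Real.exp (3 * f x) ∂μ)
    (h2 : C₂ * ∫ x, Real.exp (((n : ℝ) + 1) * f x) ∂μ ≤
      C₁ * ∫ x, Real.exp (((n : ℝ) - 3) * f x) ∂μ) :
    ∃ c : ℝ, f =ᵐ[μ] fun _ => c := by
  haveI : IsFiniteMeasure μ := ⟨hμfin⟩
  set N : ℝ := (n : ℝ) with hNdef
  have hN : 4 ≤ N := by rw [hNdef]; exact_mod_cast hn
  set I0 := ∫ x, Real.exp (-f x) ∂μ with hI0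
  set I3 := ∫ x, Real.exp (3 * f x) ∂μ with hI3
  set Im := ∫ x, Real.exp ((N - 3) * f x) ∂μ with hIm
  set Ip := ∫ x, Real.exp ((N + 1) * f x) ∂μ with hIp
  have hI0n : 0 ≤ I0 := integral_nonneg fun x => (Real.exp_pos _).le
  have hI3n : 0 ≤ I3 := integral_nonneg fun x => (Real.exp_pos _).le
  have hImn : 0 ≤ Im := integral_nonneg fun x => (Real.exp_pos _).le
  have hIpn : 0 ≤ Ip := integral_nonneg fun x => (Real.exp_pos _).le
  have hmul : (C₁ * I0) * (C₂ * Ip) ≤ (C₂ * I3) * (C₁ * Im) :=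
    mul_le_mul h1 h2 (mul_nonneg hC₂.le hIpn) (mul_nonneg hC₂.le hI3n)
  have hkey : I0 * Ip ≤ I3 * Im := by
    have hc : 0 < C₁ * C₂ := mul_pos hC₁ hC₂
    nlinarith
  set F : X × X → ℝ := fun z =>
    Real.exp (-f z.1) * Real.exp ((N+1) * f z.2)
      + Real.exp ((N+1) * f z.1) * Real.exp (-f z.2)
      - Real.exp (3 * f z.1) * Real.exp ((N-3) * f z.2)
      - Real.exp ((N-3) * f z.1) * Real.exp (3 * f z.2) with hFdef
  have hFnonneg : ∀ z, 0 ≤ F z := by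
    intro z
    have h := key_le N (f z.1) (f z.2) hN
    simp only [hFdef]
    nlinarith [mul_comm (Real.exp (-f z.2)) (Real.exp ((N+1) * f z.1)),
      mul_comm (Real.exp (3 * f z.2)) (Real.exp ((N-3) * f z.1))]
  have hA : Integrable (fun z : X × X => Real.exp (-f z.1) * Real.exp ((N+1) * f z.2)) (μ.prod μ) :=
    hint0.mul_prod hintp
  have hB : Integrable (fun z : X × X => Real.exp ((N+1) * f z.1) * Real.exp (-f z.2)) (μ.prod μ) :=
    hintp.mul_prod hint0
  have hC : Integrable (fun z : X × X => Real.exp (3 * f z.1) * Real.exp ((N-3) * f z.2)) (μ.prod μ) :=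
    hint3.mul_prod hintm
  have hD : Integrable (fun z : X × X => Real.exp ((N-3) * f z.1) * Real.exp (3 * f z.2)) (μ.prod μ) :=
    hintm.mul_prod hint3
  have hAB : Integrable (fun z : X × X => Real.exp (-f z.1) * Real.exp ((N+1) * f z.2)
      + Real.exp ((N+1) * f z.1) * Real.exp (-f z.2)) (μ.prod μ) := hA.add hB
  have hABC : Integrable (fun z : X × X => Real.exp (-f z.1) * Real.exp ((N+1) * f z.2)
      + Real.exp ((N+1) * f z.1) * Real.exp (-f z.2)
      - Real.exp (3 * f z.1) * Real.exp ((N-3) * f z.2)) (μ.prod μ) := hAB.sub hC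
  have hFint : Integrable F (μ.prod μ) := hABC.sub hD
  have hFval : ∫ z, F z ∂(μ.prod μ) = I0 * Ip + Ip * I0 - I3 * Im - Im * I3 := by
    simp only [hFdef]
    rw [integral_sub hABC hD, integral_sub hAB hC, integral_add hA hB,
      integral_prod_mul (fun x => Real.exp (-f x)) (fun y => Real.exp ((N+1) * f y)),
      integral_prod_mul (fun x => Real.exp ((N+1) * f x)) (fun y => Real.exp (-f y)),
      integral_prod_mul (fun x => Real.exp (3 * f x)) (fun y => Real.exp ((N-3) * f y)),
      integral_prod_mul (fun x => Real.exp ((N-3) * f x)) (fun y => Real.exp (3 * f y))]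
  have hFzero : ∫ z, F z ∂(μ.prod μ) = 0 := by
    have h1' : ∫ z, F z ∂(μ.prod μ) ≤ 0 := by rw [hFval]; nlinarith
    have h2' : 0 ≤ ∫ z, F z ∂(μ.prod μ) := integral_nonneg hFnonneg
    linarith
  have hFae : F =ᵐ[μ.prod μ] 0 :=
    (integral_eq_zero_iff_of_nonneg hFnonneg hFint).mp hFzero
  have heq : ∀ᵐ z ∂(μ.prod μ), f z.1 = f z.2 := by
    filter_upwards [hFae] with z hz
    by_contra hne
    have hlt := key_lt N (f z.1) (f z.2) hN hne
    have hz' : F z = 0 := hz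
    simp only [hFdef] at hz'
    nlinarith [mul_comm (Real.exp (-f z.2)) (Real.exp ((N+1) * f z.1)),
      mul_comm (Real.exp (3 * f z.2)) (Real.exp ((N-3) * f z.1))]
  have heq' : ∀ᵐ x ∂μ, ∀ᵐ y ∂μ, f x = f y := Measure.ae_ae_of_ae_prod heq
  haveI : (ae μ).NeBot := ae_neBot.2 (by
    intro h
    simp [h] at hμ0)
  obtain ⟨x₀, hx₀⟩ := heq'.exists
  refine ⟨f x₀, ?_⟩
  filter_upwards [hx₀] with y hy
  exact hy.symm
end
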